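/- arXiv:1912.04584 — 2 statements merged into one kernel-verified Lean document; each statement's English description precedes it below -/
import Mathlib

section
/- Let $d \ge 1$ and let $u$ be a unit vector in $\mathbb{Z}^d$ and $x$ a unit vector with $x \neq \pm u$. Then the number of nearest-neighbor paths of length 4 from $u$ to $x$ in $\mathbb{Z}^d$ that avoid both $\mathbf{0}$ and $v := u + x$ is exactly $2(2d - 4)$. -/
open MeasureTheory
open scoped ENNReal NNReal

/-- Vertices of the hypercubic lattice `ℤ^d`. -/
abbrev Vertex (d : ℕ) := Fin d → ℤ

/-- A site-percolation configuration: each vertex is occupied (`true`) or vacant. -/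
abbrev Config (d : ℕ) := Vertex d → Bool

/-- The ℓ¹ norm `|x|₁ = ∑ᵢ |xᵢ|`. -/
def dist1 {d : ℕ} (x : Vertex d) : ℕ := ∑ i, (x i).natAbs

/-- Nearest neighbours. -/
def IsNbr {d : ℕ} (x y : Vertex d) : Prop := dist1 (x - y) = 1

/-- `ConnIn ω S l x y`: `x` is connected to `y` by a nearest-neighbour path with at
least `l` edges all of whose internal vertices are occupied in `ω` and lie in `S`. -/
def ConnIn {d : ℕ} (ω : Config d) (S : Set (Vertex d)) (l : ℕ) (x y : Vertex d) : Prop :=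
  x ≠ y ∧ ∃ (k : ℕ) (γ : ℕ → Vertex d), l ≤ k ∧ γ 0 = x ∧ γ k = y ∧
    (∀ i < k, IsNbr (γ i) (γ (i + 1))) ∧
    ∀ i, 0 < i → i < k → (ω (γ i) = true ∧ γ i ∈ S)

/-- `x ⟷ y` : connection by an occupied path. -/
def Conn {d : ℕ} (ω : Config d) (x y : Vertex d) : Prop := ConnIn ω Set.univ 1 x y

/-- `μ` is the law of i.i.d. Bernoulli(`p`) site percolation on `ℤ^d`. -/
def IsBernoulli (d : ℕ) (p : ℝ) (μ : Measure (Config d)) : Prop :=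
  IsProbabilityMeasure μ ∧
  ∀ (s : Finset (Vertex d)) (b : Vertex d → Bool),
    μ {ω | ∀ v ∈ s, ω v = b v} = ∏ v ∈ s, ENNReal.ofReal (if b v then p else 1 - p)

/-- The two-point function `τ_p(x)`. -/
noncomputable def tau {d : ℕ} (μ : Measure (Config d)) (x : Vertex d) : ℝ≥0∞ :=
  μ {ω | Conn ω 0 x}

/-- `τ_p^{(l)}(x)`: probability of a connection using at least `l` edges. -/
noncomputable def tauL {d : ℕ} (μ : Measure (Config d)) (l : ℕ) (x : Vertex d) : ℝ≥0∞ :=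
  μ {ω | ConnIn ω Set.univ l 0 x}

/-- `J(x) = 𝟙{|x|₁ = 1}` (ℝ≥0∞-valued). -/
noncomputable def Jfun {d : ℕ} (x : Vertex d) : ℝ≥0∞ := if dist1 x = 1 then 1 else 0

/-- `m`-fold convolution `J^{*m}` (ℝ≥0∞-valued). -/
noncomputable def Jpow {d : ℕ} : ℕ → Vertex d → ℝ≥0∞
  | 0, x => if x = 0 then 1 else 0
  | m + 1, x => ∑' y, Jfun y * Jpow m (x - y)

/-!
Write the walk as its four unit steps; they sum to `x - u`, of ℓ¹-norm 2. Unit vectors that are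
pairwise not opposite point the same way in every coordinate, so their sum has norm equal to their
number; hence two of the four steps cancel. Injectivity and the avoidance of `0` and `u + x` force
these to be the first and last steps, `z` and `-z` with `z ≠ ±u, ±x`, while the middle two are `x`
and `-u` in either order. So every admissible walk runs along the cube spanned by `u, z, x`, passing
above `0` or above `u + x`; conversely both of these walks are admissible because `u, z, x` lie on
three distinct axes. Finally, there are `2d - 4` unit vectors `z ≠ ±u, ±x`.
-/

variable {d : ℕ}

lemma dist1_neg (v : Vertex d) : dist1 (-v) = dist1 v := by
  simp [dist1]

lemma dist1_add_le (v w : Vertex d) : dist1 (v + w) ≤ dist1 v + dist1 w := by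
  simp only [dist1, ← Finset.sum_add_distrib]
  exact Finset.sum_le_sum fun t _ => Int.natAbs_add_le (v t) (w t)

lemma dist1_single (k : Fin d) (c : ℤ) : dist1 (Pi.single k c) = c.natAbs := by
  rw [dist1, Finset.sum_eq_single k (fun t _ ht => by simp [ht]) (by simp)]
  simp

lemma ne_zero_of_dist1_eq_one {v : Vertex d} (hv : dist1 v = 1) : v ≠ 0 := by
  rintro rfl
  simp [dist1] at hv

lemma isNbr_comm {v w : Vertex d} : IsNbr v w ↔ IsNbr w v := by
  rw [IsNbr, IsNbr, ← dist1_neg, neg_sub]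

lemma exists_apply_ne_zero_of_dist1_eq_one {v : Vertex d} (hv : dist1 v = 1) : ∃ t, v t ≠ 0 := by
  by_contra! h
  exact ne_zero_of_dist1_eq_one hv (funext h)

lemma eq_single_of_dist1_eq_one {v : Vertex d} (hv : dist1 v = 1) {t : Fin d} (ht : v t ≠ 0) :
    v = Pi.single t (v t) ∧ (v t).natAbs = 1 := by
  have hsplit := Finset.add_sum_erase Finset.univ (fun i => (v i).natAbs) (Finset.mem_univ t)
  rw [← dist1, hv] at hsplit
  have hpos := Int.natAbs_pos.mpr ht
  have hrest : ∀ i ∈ Finset.univ.erase t, (v i).natAbs = 0 :=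
    Finset.sum_eq_zero_iff.mp (by omega)
  refine ⟨funext fun i => ?_, by omega⟩
  rcases eq_or_ne i t with rfl | hi
  · simp
  · simpa [hi] using hrest i (by simp [hi])

lemma eq_or_eq_neg_of_dist1_eq_one {v w : Vertex d} (hv : dist1 v = 1) (hw : dist1 w = 1)
    {t : Fin d} (hvt : v t ≠ 0) (hwt : w t ≠ 0) : w = v ∨ w = -v := by
  obtain ⟨hv, hvt1⟩ := eq_single_of_dist1_eq_one hv hvt
  obtain ⟨hw, hwt1⟩ := eq_single_of_dist1_eq_one hw hwt
  rcases Int.natAbs_eq_natAbs_iff.mp (hwt1.trans hvt1.symm) with h | h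
  · left; rw [hw, hv, h]
  · right; rw [hw, hv, h, Pi.single_neg]

lemma apply_eq_zero_of_ne_of_ne_neg {v w : Vertex d} (hv : dist1 v = 1) (hw : dist1 w = 1)
    (hwv : w ≠ v) (hwv' : w ≠ -v) {t : Fin d} (hvt : v t ≠ 0) : w t = 0 := by
  by_contra hwt
  rcases eq_or_eq_neg_of_dist1_eq_one hv hw hvt hwt with h | h <;> contradiction

lemma setOf_dist1_eq_one_eq_range :
    {v : Vertex d | dist1 v = 1} = Set.range fun p : Fin d × ℤˣ => Pi.single p.1 (p.2 : ℤ) := by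
  ext v
  constructor
  · intro hv
    obtain ⟨t, ht⟩ := exists_apply_ne_zero_of_dist1_eq_one hv
    obtain ⟨hvt, hvt1⟩ := eq_single_of_dist1_eq_one hv ht
    exact ⟨(t, (Int.isUnit_iff_natAbs_eq.mpr hvt1).unit), hvt.symm⟩
  · rintro ⟨⟨t, ε⟩, rfl⟩
    exact (dist1_single t ε).trans (Int.isUnit_iff_natAbs_eq.mp ε.isUnit)

lemma finite_setOf_dist1_eq_one : {v : Vertex d | dist1 v = 1}.Finite := by
  rw [setOf_dist1_eq_one_eq_range]
  exact Set.finite_range _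

lemma ncard_setOf_dist1_eq_one : {v : Vertex d | dist1 v = 1}.ncard = 2 * d := by
  rw [setOf_dist1_eq_one_eq_range, Set.ncard_range_of_injective, Nat.card_prod,
    Nat.card_eq_fintype_card, Fintype.card_fin, Nat.card_eq_fintype_card, Fintype.card_units_int,
    mul_comm]
  rintro ⟨t, ε⟩ ⟨t', ε'⟩ h
  have ht := congrFun h t
  simp only [Pi.single_eq_same] at ht
  obtain rfl : t = t' := by
    by_contra htt
    simp [Pi.single_eq_of_ne htt] at ht
  rw [Pi.single_eq_same] at ht
  exact congrArg _ (Units.val_injective ht)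

lemma Int.natAbs_sum_of_nonneg {ι : Type*} (s : Finset ι) {f : ι → ℤ} (hf : ∀ i, 0 ≤ f i) :
    (∑ i ∈ s, f i).natAbs = ∑ i ∈ s, (f i).natAbs := by
  zify
  simp only [Finset.abs_sum_of_nonneg' hf, abs_of_nonneg (hf _)]

lemma Int.natAbs_sum_of_nonpos {ι : Type*} (s : Finset ι) {f : ι → ℤ} (hf : ∀ i, f i ≤ 0) :
    (∑ i ∈ s, f i).natAbs = ∑ i ∈ s, (f i).natAbs := by
  simpa using Int.natAbs_sum_of_nonneg s (f := fun i => -f i) fun i => neg_nonneg.mpr (hf i)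

theorem dist1_sum_of_pairwise_add_ne_zero {ι : Type*} [Fintype ι] {s : ι → Vertex d}
    (hs : ∀ m, dist1 (s m) = 1) (hpair : Pairwise fun m l => s m + s l ≠ 0) :
    dist1 (∑ m, s m) = Fintype.card ι := by
  have hsign (t : Fin d) : (∀ m, 0 ≤ s m t) ∨ (∀ m, s m t ≤ 0) := by
    by_contra! ⟨⟨m, hm⟩, ⟨l, hl⟩⟩
    rcases eq_or_eq_neg_of_dist1_eq_one (hs m) (hs l) hm.ne hl.ne' with h | h
    · rw [h] at hl; exact hm.not_gt hl
    · have hml : m ≠ l := by rintro rfl; exact hm.not_gt hl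
      exact hpair hml (by rw [h, add_neg_cancel])
  calc dist1 (∑ m, s m) = ∑ t, ∑ m, (s m t).natAbs := by
        refine Finset.sum_congr rfl fun t _ => ?_
        rw [Finset.sum_apply]
        rcases hsign t with h | h
        exacts [Int.natAbs_sum_of_nonneg _ h, Int.natAbs_sum_of_nonpos _ h]
    _ = ∑ m, dist1 (s m) := Finset.sum_comm
    _ = Fintype.card ι := by simp [hs]

lemma exists_lt_add_eq_zero_of_dist1_sum_lt {ι : Type*} [Fintype ι] [LinearOrder ι]
    {s : ι → Vertex d} (hs : ∀ m, dist1 (s m) = 1) (hlt : dist1 (∑ m, s m) < Fintype.card ι) :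
    ∃ m l, m < l ∧ s m + s l = 0 := by
  by_contra! h
  refine hlt.ne (dist1_sum_of_pairwise_add_ne_zero hs fun m l hml => ?_)
  rcases hml.lt_or_gt with hml | hml
  · exact h m l hml
  · rw [add_comm]; exact h l m hml

lemma eq_and_eq_or_eq_and_eq_of_add_eq_add {a b p q : Vertex d} (ha : dist1 a = 1)
    (hb : dist1 b = 1) (hp : dist1 p = 1) (hq : dist1 q = 1) (hab : a + b ≠ 0)
    (h : p + q = a + b) : p = a ∧ q = b ∨ p = b ∧ q = a := by
  have hsum : ∑ m, ![a, b, -p] m = q := by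
    rw [Fin.sum_univ_three]; simp only [Matrix.cons_val]; rw [← h]; abel
  obtain ⟨m, l, hml, hzero⟩ := exists_lt_add_eq_zero_of_dist1_sum_lt
    (s := ![a, b, -p]) (fun m => by fin_cases m <;> simp [ha, hb, hp, dist1_neg])
    (by rw [hsum, hq]; simp)
  fin_cases m <;> fin_cases l <;> simp at hml hzero
  · exact absurd hzero hab
  · rw [add_neg_eq_zero] at hzero; subst hzero
    exact Or.inl ⟨rfl, add_left_cancel h⟩
  · rw [add_neg_eq_zero] at hzero; subst hzero
    exact Or.inr ⟨rfl, add_left_cancel (h.trans (add_comm _ _))⟩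

lemma add_eq_zero_and_of_sum_eq_add {a b : Vertex d} {t : Fin 4 → Vertex d} (ha : dist1 a = 1)
    (hb : dist1 b = 1) (hab : a + b ≠ 0) (ht : ∀ m, dist1 (t m) = 1)
    (hsum : t 0 + t 1 + t 2 + t 3 = a + b) (h01 : t 0 + t 1 ≠ 0) (h12 : t 1 + t 2 ≠ 0)
    (h23 : t 2 + t 3 ≠ 0) (h0 : t 0 ≠ a ∧ t 0 ≠ b) (h3 : t 3 ≠ a ∧ t 3 ≠ b) :
    t 0 + t 3 = 0 ∧ (t 1 = a ∧ t 2 = b ∨ t 1 = b ∧ t 2 = a) := by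
  obtain ⟨m, l, hml, hzero⟩ := exists_lt_add_eq_zero_of_dist1_sum_lt ht (by
    rw [Fin.sum_univ_four, hsum]
    exact (dist1_add_le a b).trans_lt (by rw [ha, hb]; simp))
  fin_cases m <;> fin_cases l <;> simp at hml hzero
  · exact absurd hzero h01
  · have hrest : t 1 + t 3 = a + b := by linear_combination (norm := module) hsum - hzero
    rcases eq_and_eq_or_eq_and_eq_of_add_eq_add ha hb (ht 1) (ht 3) hab hrest with
      ⟨-, h⟩ | ⟨-, h⟩
    exacts [absurd h h3.2, absurd h h3.1]
  · exact ⟨hzero, eq_and_eq_or_eq_and_eq_of_add_eq_add ha hb (ht 1) (ht 2) hab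
      (by linear_combination (norm := module) hsum - hzero)⟩
  · exact absurd hzero h12
  · have hrest : t 0 + t 2 = a + b := by linear_combination (norm := module) hsum - hzero
    rcases eq_and_eq_or_eq_and_eq_of_add_eq_add ha hb (ht 0) (ht 2) hab hrest with
      ⟨h, -⟩ | ⟨h, -⟩
    exacts [absurd h h0.1, absurd h h0.2]
  · exact absurd hzero h23

def step {n : ℕ} (γ : Fin (n + 1) → Vertex d) (m : Fin n) : Vertex d := γ m.succ - γ m.castSucc

lemma apply_succ_eq_add_step {n : ℕ} (γ : Fin (n + 1) → Vertex d) (m : Fin n) :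
    γ m.succ = γ m.castSucc + step γ m := by
  simp [step]

lemma eq_of_apply_zero_eq_of_step_eq {n : ℕ} {γ γ' : Fin (n + 1) → Vertex d} (h0 : γ 0 = γ' 0)
    (h : step γ = step γ') : γ = γ' := by
  funext m
  induction m using Fin.induction with
  | zero => exact h0
  | succ m ih => rw [apply_succ_eq_add_step γ, ih, h, ← apply_succ_eq_add_step γ']

def transverseUnits (u x : Vertex d) : Set (Vertex d) := {z | dist1 z = 1} \ {u, -u, x, -x}

lemma mem_transverseUnits {u x z : Vertex d} :
    z ∈ transverseUnits u x ↔ dist1 z = 1 ∧ z ≠ u ∧ z ≠ -u ∧ z ≠ x ∧ z ≠ -x := by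
  simp [transverseUnits]

lemma ncard_transverseUnits {u x : Vertex d} (hu : dist1 u = 1) (hx : dist1 x = 1) (hxu : x ≠ u)
    (hxu' : x ≠ -u) : (transverseUnits u x).ncard = 2 * d - 4 := by
  have hsub : ({u, -u, x, -x} : Set (Vertex d)) ⊆ {v | dist1 v = 1} := by
    simp [Set.insert_subset_iff, hu, hx, dist1_neg]
  have hfour : ({u, -u, x, -x} : Set (Vertex d)).ncard = 4 := by
    refine Set.ncard_eq_four.mpr ⟨u, -u, x, -x, ?_, hxu.symm, ?_, hxu'.symm, ?_, ?_, rfl⟩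
    · simpa [eq_comm, self_eq_neg] using ne_zero_of_dist1_eq_one hu
    · rintro rfl; exact hxu' (neg_neg x).symm
    · simpa [neg_eq_iff_eq_neg] using hxu.symm
    · simpa [eq_comm, self_eq_neg] using ne_zero_of_dist1_eq_one hx
  rw [transverseUnits, Set.ncard_sdiff hsub, ncard_setOf_dist1_eq_one, hfour]

def cubeCorner (u z x : Vertex d) (c : ℤ × ℤ × ℤ) : Vertex d := c.1 • u + c.2.1 • z + c.2.2 • x

lemma cubeCorner_injective {u z x : Vertex d} (hu : dist1 u = 1) (hz : dist1 z = 1)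
    (hx : dist1 x = 1) (hzu : z ≠ u) (hzu' : z ≠ -u) (hxu : x ≠ u) (hxu' : x ≠ -u) (hxz : x ≠ z)
    (hxz' : x ≠ -z) : Function.Injective (cubeCorner u z x) := by
  have ne_neg_comm {v w : Vertex d} (h : w ≠ -v) : v ≠ -w := fun h' => h (by rw [h', neg_neg])
  obtain ⟨i, hi⟩ := exists_apply_ne_zero_of_dist1_eq_one hu
  obtain ⟨k, hk⟩ := exists_apply_ne_zero_of_dist1_eq_one hz
  obtain ⟨j, hj⟩ := exists_apply_ne_zero_of_dist1_eq_one hx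
  have hzi := apply_eq_zero_of_ne_of_ne_neg hu hz hzu hzu' hi
  have hxi := apply_eq_zero_of_ne_of_ne_neg hu hx hxu hxu' hi
  have huk := apply_eq_zero_of_ne_of_ne_neg hz hu hzu.symm (ne_neg_comm hzu') hk
  have hxk := apply_eq_zero_of_ne_of_ne_neg hz hx hxz hxz' hk
  have huj := apply_eq_zero_of_ne_of_ne_neg hx hu hxu.symm (ne_neg_comm hxu') hj
  have hzj := apply_eq_zero_of_ne_of_ne_neg hx hz hxz.symm (ne_neg_comm hxz') hj
  -- `u, z, x` lie on the distinct axes `i, k, j`, and each of these coordinates reads off one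
  -- coefficient.
  rintro ⟨a, b, c⟩ ⟨a', b', c'⟩ h
  have hi' := congrFun h i
  have hk' := congrFun h k
  have hj' := congrFun h j
  simp only [cubeCorner, Pi.add_apply, Pi.smul_apply, smul_eq_mul, hzi, hxi, huk, hxk, huj, hzj,
    mul_zero, add_zero, zero_add] at hi' hk' hj'
  rw [mul_right_cancel₀ hi hi', mul_right_cancel₀ hk hk', mul_right_cancel₀ hj hj']

lemma cubeCorner_injective_of_mem_transverseUnits {u x z : Vertex d} (hu : dist1 u = 1)
    (hx : dist1 x = 1) (hxu : x ≠ u) (hxu' : x ≠ -u) (hz : z ∈ transverseUnits u x) :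
    Function.Injective (cubeCorner u z x) := by
  obtain ⟨hz, hzu, hzu', hzx, hzx'⟩ := mem_transverseUnits.mp hz
  exact cubeCorner_injective hu hz hx hzu hzu' hxu hxu' (Ne.symm hzx)
    (fun h => hzx' (by rw [h, neg_neg]))

lemma zero_eq_cubeCorner (u z x : Vertex d) : 0 = cubeCorner u z x (0, 0, 0) := by
  simp [cubeCorner]

lemma add_eq_cubeCorner (u z x : Vertex d) : u + x = cubeCorner u z x (1, 0, 1) := by
  simp [cubeCorner]

def pathOverZero (u x z : Vertex d) : Fin 5 → Vertex d := ![u, u + z, z, z + x, x]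

def pathOverSum (u x z : Vertex d) : Fin 5 → Vertex d := ![u, u + z, u + z + x, z + x, x]

lemma pathOverZero_eq_comp (u x z : Vertex d) : pathOverZero u x z =
    cubeCorner u z x ∘ ![(1, 0, 0), (1, 1, 0), (0, 1, 0), (0, 1, 1), (0, 0, 1)] := by
  funext m; fin_cases m <;> simp [pathOverZero, cubeCorner]

lemma pathOverSum_eq_comp (u x z : Vertex d) : pathOverSum u x z =
    cubeCorner u z x ∘ ![(1, 0, 0), (1, 1, 0), (1, 1, 1), (0, 1, 1), (0, 0, 1)] := by
  funext m; fin_cases m <;> simp [pathOverSum, cubeCorner]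

lemma step_pathOverZero (u x z : Vertex d) : step (pathOverZero u x z) = ![z, -u, x, -z] := by
  funext m; fin_cases m <;> simp [step, pathOverZero]

lemma step_pathOverSum (u x z : Vertex d) : step (pathOverSum u x z) = ![z, x, -u, -z] := by
  funext m; fin_cases m <;> simp [step, pathOverSum]

lemma pathOverZero_injective (u x : Vertex d) : Function.Injective (pathOverZero u x) :=
  fun _ _ h => congrFun h 2

lemma pathOverSum_injective (u x : Vertex d) : Function.Injective (pathOverSum u x) :=
  fun _ _ h => add_left_cancel (congrFun h 1)

lemma disjoint_image_pathOverZero_image_pathOverSum {u x : Vertex d} (hxu' : x ≠ -u)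
    (S T : Set (Vertex d)) : Disjoint (pathOverZero u x '' S) (pathOverSum u x '' T) := by
  rw [Set.disjoint_left]
  rintro _ ⟨z, -, rfl⟩ ⟨z', -, h⟩
  have h1 : u + z' = u + z := congrFun h 1
  have h2 : u + z' + x = z := congrFun h 2
  rw [add_left_cancel h1] at h2
  exact hxu' (eq_neg_of_add_eq_zero_right (by linear_combination (norm := module) h2))

def admissiblePaths (u x : Vertex d) : Set (Fin 5 → Vertex d) :=
  {γ : Fin 5 → Vertex d | γ 0 = u ∧ γ 4 = x ∧ Function.Injective γ ∧
        (∀ i : Fin 4, IsNbr (γ i.castSucc) (γ i.succ)) ∧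
        γ 1 ∉ ({0, u + x} : Set (Vertex d)) ∧ γ 2 ∉ ({0, u + x} : Set (Vertex d)) ∧
        γ 3 ∉ ({0, u + x} : Set (Vertex d))}

lemma pathOverZero_mem_admissiblePaths {u x z : Vertex d} (hu : dist1 u = 1) (hx : dist1 x = 1)
    (hxu : x ≠ u) (hxu' : x ≠ -u) (hz : z ∈ transverseUnits u x) :
    pathOverZero u x z ∈ admissiblePaths u x := by
  have hcube := cubeCorner_injective_of_mem_transverseUnits hu hx hxu hxu' hz
  have hz1 := (mem_transverseUnits.mp hz).1
  refine ⟨rfl, rfl, pathOverZero_eq_comp u x z ▸ hcube.comp (by decide), fun m => ?_, ?_⟩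
  · rw [isNbr_comm]
    change dist1 (step (pathOverZero u x z) m) = 1
    rw [step_pathOverZero]
    fin_cases m <;> simp [hz1, hu, hx, dist1_neg]
  · rw [pathOverZero_eq_comp, zero_eq_cubeCorner u z x, add_eq_cubeCorner u z x]
    simp only [Function.comp_apply, Set.mem_insert_iff, Set.mem_singleton_iff, hcube.eq_iff]
    decide

lemma pathOverSum_mem_admissiblePaths {u x z : Vertex d} (hu : dist1 u = 1) (hx : dist1 x = 1)
    (hxu : x ≠ u) (hxu' : x ≠ -u) (hz : z ∈ transverseUnits u x) :
    pathOverSum u x z ∈ admissiblePaths u x := by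
  have hcube := cubeCorner_injective_of_mem_transverseUnits hu hx hxu hxu' hz
  have hz1 := (mem_transverseUnits.mp hz).1
  refine ⟨rfl, rfl, pathOverSum_eq_comp u x z ▸ hcube.comp (by decide), fun m => ?_, ?_⟩
  · rw [isNbr_comm]
    change dist1 (step (pathOverSum u x z) m) = 1
    rw [step_pathOverSum]
    fin_cases m <;> simp [hz1, hu, hx, dist1_neg]
  · rw [pathOverSum_eq_comp, zero_eq_cubeCorner u z x, add_eq_cubeCorner u z x]
    simp only [Function.comp_apply, Set.mem_insert_iff, Set.mem_singleton_iff, hcube.eq_iff]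
    decide

lemma exists_eq_pathOverZero_or_eq_pathOverSum {u x : Vertex d} {γ : Fin 5 → Vertex d}
    (hu : dist1 u = 1) (hx : dist1 x = 1) (hxu : x ≠ u) (hγ : γ ∈ admissiblePaths u x) :
    ∃ z ∈ transverseUnits u x, γ = pathOverZero u x z ∨ γ = pathOverSum u x z := by
  obtain ⟨h0, h4, hinj, hnbr, h1, -, h3⟩ := hγ
  simp only [Set.mem_insert_iff, Set.mem_singleton_iff, not_or] at h1 h3
  have e1 : γ 1 = γ 0 + step γ 0 := apply_succ_eq_add_step γ 0
  have e2 : γ 2 = γ 1 + step γ 1 := apply_succ_eq_add_step γ 1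
  have e3 : γ 3 = γ 2 + step γ 2 := apply_succ_eq_add_step γ 2
  have e4 : γ 4 = γ 3 + step γ 3 := apply_succ_eq_add_step γ 3
  -- each hypothesis on the steps is injectivity or avoidance of `0, u + x` at `γ 1` or `γ 3`
  obtain ⟨h03, h12⟩ := add_eq_zero_and_of_sum_eq_add (b := -u) (t := step γ) hx
    (by rwa [dist1_neg]) (by rwa [← sub_eq_add_neg, sub_ne_zero]) (fun m => isNbr_comm.mp (hnbr m))
    (by linear_combination (norm := module) h4 - h0 - (e4 + e3 + e2 + e1))
    (fun h => hinj.ne (show (2 : Fin 5) ≠ 0 by decide)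
      (by linear_combination (norm := module) e2 + e1 + h))
    (fun h => hinj.ne (show (3 : Fin 5) ≠ 1 by decide)
      (by linear_combination (norm := module) e3 + e2 + h))
    (fun h => hinj.ne (show (4 : Fin 5) ≠ 2 by decide)
      (by linear_combination (norm := module) e4 + e3 + h))
    ⟨fun h => h1.2 (by linear_combination (norm := module) e1 + h0 + h),
      fun h => h1.1 (by linear_combination (norm := module) e1 + h0 + h)⟩
    ⟨fun h => h3.1 (by linear_combination (norm := module) -e4 + h4 - h),
      fun h => h3.2 (by linear_combination (norm := module) -e4 + h4 - h)⟩
  refine ⟨step γ 0, mem_transverseUnits.mpr ⟨isNbr_comm.mp (hnbr 0), fun hz => ?_, fun hz => ?_,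
    fun hz => ?_, fun hz => ?_⟩, ?_⟩
  · exact h3.2 (by linear_combination (norm := module) -e4 + h4 - h03 + hz)
  · exact h1.1 (by linear_combination (norm := module) e1 + h0 + hz)
  · exact h1.2 (by linear_combination (norm := module) e1 + h0 + hz)
  · exact h3.1 (by linear_combination (norm := module) -e4 + h4 - h03 + hz)
  have h3' : step γ 3 = -step γ 0 := eq_neg_of_add_eq_zero_right h03
  rcases h12 with ⟨h1x, h2u⟩ | ⟨h1u, h2x⟩
  · refine Or.inr (eq_of_apply_zero_eq_of_step_eq h0 ?_)
    rw [step_pathOverSum]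
    funext m; fin_cases m <;> simp [h1x, h2u, h3']
  · refine Or.inl (eq_of_apply_zero_eq_of_step_eq h0 ?_)
    rw [step_pathOverZero]
    funext m; fin_cases m <;> simp [h1u, h2x, h3']

lemma admissiblePaths_eq_union {u x : Vertex d} (hu : dist1 u = 1) (hx : dist1 x = 1)
    (hxu : x ≠ u) (hxu' : x ≠ -u) : admissiblePaths u x =
      pathOverZero u x '' transverseUnits u x ∪ pathOverSum u x '' transverseUnits u x := by
  ext γ
  constructor
  · intro hγ
    obtain ⟨z, hz, rfl | rfl⟩ := exists_eq_pathOverZero_or_eq_pathOverSum hu hx hxu hγ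
    exacts [Or.inl ⟨z, hz, rfl⟩, Or.inr ⟨z, hz, rfl⟩]
  · rintro (⟨z, hz, rfl⟩ | ⟨z, hz, rfl⟩)
    exacts [pathOverZero_mem_admissiblePaths hu hx hxu hxu' hz,
      pathOverSum_mem_admissiblePaths hu hx hxu hxu' hz]

theorem count_paths_length_four_general (d : ℕ) (u x : Vertex d)
    (hu : dist1 u = 1) (hx : dist1 x = 1) (h1 : x ≠ u) (h2 : x ≠ -u) :
    Set.ncard {γ : Fin 5 → Vertex d | γ 0 = u ∧ γ 4 = x ∧ Function.Injective γ ∧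
        (∀ i : Fin 4, IsNbr (γ i.castSucc) (γ i.succ)) ∧
        γ 1 ∉ ({0, u + x} : Set (Vertex d)) ∧ γ 2 ∉ ({0, u + x} : Set (Vertex d)) ∧
        γ 3 ∉ ({0, u + x} : Set (Vertex d))} = 2 * (2 * d - 4) := by
  have hfin : (transverseUnits u x).Finite := finite_setOf_dist1_eq_one.sdiff
  change (admissiblePaths u x).ncard = _
  rw [admissiblePaths_eq_union hu hx h1 h2,
    Set.ncard_union_eq (disjoint_image_pathOverZero_image_pathOverSum h2 _ _) (hfin.image _)
      (hfin.image _),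
    Set.ncard_image_of_injective _ (pathOverZero_injective u x),
    Set.ncard_image_of_injective _ (pathOverSum_injective u x), ncard_transverseUnits hu hx h1 h2]
  omega

/-- for unit vectors `u`, `x` with `x ≠ ±u`, there are exactly `2(2d-4)`
nearest-neighbour paths of length 4 from `u` to `x` avoiding `0` and `u + x`. -/
theorem count_paths_length_four (d : ℕ) (hd : 1 ≤ d) (u x : Vertex d)
    (hu : dist1 u = 1) (hx : dist1 x = 1) (h1 : x ≠ u) (h2 : x ≠ -u) :
    Set.ncard {γ : Fin 5 → Vertex d | γ 0 = u ∧ γ 4 = x ∧ Function.Injective γ ∧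
        (∀ i : Fin 4, IsNbr (γ i.castSucc) (γ i.succ)) ∧
        γ 1 ∉ ({0, u + x} : Set (Vertex d)) ∧ γ 2 ∉ ({0, u + x} : Set (Vertex d)) ∧
        γ 3 ∉ ({0, u + x} : Set (Vertex d))} = 2 * (2 * d - 4) :=
  count_paths_length_four_general d u x hu hx h1 h2
end

section
/- Suppose real sequences (in $\Omega = 2d \to \infty$) satisfy: $1 = p_c(\Omega + \widehat\Pi)$ with $\widehat\Pi = \sum_{m\ge0}(-1)^m\widehat\Pi^{(m)}$, where $|\widehat\Pi^{(m)}| \le C\Omega^{1-(m\vee1)}$, and the three expansions $\widehat\Pi^{(0)} = \tfrac12 \Omega^2 p_c^2 + \tfrac52 \Omega^{-1} + \mathcal{O}(\Omega^{-2})$, $\widehat\Pi^{(1)} = \Omega p_c + 2\Omega^2 p_c^2 + 4\Omega^{-1} + \mathcal{O}(\Omega^{-2})$, $\widehat\Pi^{(2)} = 10\Omega^{-1} + \mathcal{O}(\Omega^{-2})$ hold. Then $\Omega p_c = 1 + \tfrac52 \Omega^{-1} + \tfrac{31}{4}\Omega^{-2} + \mathcal{O}(\Omega^{-3})$; equivalently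 $p_c = (2d)^{-1} + \tfrac52 (2d)^{-2} + \tfrac{31}{4}(2d)^{-3} + \mathcal{O}((2d)^{-4})$. -/
set_option maxHeartbeats 1000000

lemma tail_bound3 (C W : ℝ) (hW : 2 ≤ W) (g : ℕ → ℝ) (S : ℝ)
    (hS : HasSum (fun m : ℕ => (-1 : ℝ) ^ m * g m) S)
    (hg : ∀ m : ℕ, |g m| ≤ C * W ^ (1 - (max m 1 : ℤ))) :
    |S - (g 0 - g 1 + g 2)| ≤ 2 * C / W ^ 2 := by
  have hW0 : (0:ℝ) < W := by linarith
  have hC : 0 ≤ C := by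
    have := (abs_nonneg (g 0)).trans (hg 0)
    simpa using this
  set f : ℕ → ℝ := fun m : ℕ => (-1 : ℝ) ^ m * g m with hf
  have hfabs : ∀ m, |f m| = |g m| := by
    intro m; simp [hf, abs_mul, abs_pow]
  have hb : ∀ m : ℕ, |f (m + 3)| ≤ (C / W ^ 2) * (1 / W) ^ m := by
    intro m
    have h1 := hg (m + 3)
    push_cast at h1
    have he : (1 : ℤ) - max ((m : ℤ) + 3) 1 = -((m : ℤ) + 2) := by omega
    rw [he, show -((m : ℤ) + 2) = -(((m + 2 : ℕ)) : ℤ) by push_cast; ring,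
      zpow_neg, zpow_natCast] at h1
    rw [hfabs]
    refine h1.trans (le_of_eq ?_)
    have : (W ^ (m + 2))⁻¹ = (1 / W ^ 2) * (1 / W) ^ m := by
      rw [div_pow, one_pow, pow_add]
      rw [mul_inv]
      ring
    rw [this]
    ring
  have htail : HasSum (fun m => f (m + 3)) (S - ∑ i ∈ Finset.range 3, f i) := by
    rw [hasSum_nat_add_iff]
    simpa using hS
  have hgeo : HasSum (fun m : ℕ => (C / W ^ 2) * (1 / W) ^ m)
      ((C / W ^ 2) * (1 - 1 / W)⁻¹) :=
    (hasSum_geometric_of_lt_one (by positivity) (by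
      rw [div_lt_one hW0]; linarith)).mul_left _
  have hub : S - ∑ i ∈ Finset.range 3, f i ≤ (C / W ^ 2) * (1 - 1 / W)⁻¹ :=
    hasSum_le (fun m => (le_abs_self _).trans (hb m)) htail hgeo
  have hlb : -(S - ∑ i ∈ Finset.range 3, f i) ≤ (C / W ^ 2) * (1 - 1 / W)⁻¹ :=
    hasSum_le (fun m => (neg_le_abs _).trans (hb m)) htail.neg hgeo
  have hsum3 : ∑ i ∈ Finset.range 3, f i = g 0 - g 1 + g 2 := by
    simp [Finset.sum_range_succ, hf]
    ring
  have hBle : (C / W ^ 2) * (1 - 1 / W)⁻¹ ≤ 2 * C / W ^ 2 := by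
    have h1 : (1 - 1 / W)⁻¹ ≤ 2 := by
      have hw2 : 1 / W ≤ 1 / 2 := by
        rw [div_le_div_iff₀ hW0 (by norm_num)]; linarith
      rw [inv_le_comm₀ (by linarith) (by norm_num)]
      linarith
    calc (C / W ^ 2) * (1 - 1 / W)⁻¹ ≤ (C / W ^ 2) * 2 :=
          mul_le_mul_of_nonneg_left h1 (by positivity)
      _ = 2 * C / W ^ 2 := by ring
  rw [← hsum3, abs_le]
  constructor <;> linarith


lemma key_expansion (Cb W w p P Pi0 Pi1 Pi2 : ℝ)
    (hCb : 1 ≤ Cb) (hw0 : 0 < w) (hWw : W * w = 1) (hCw : Cb * w ≤ 1 / 20)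
    (hid : p * (W + P) = 1)
    (hT : |P - (Pi0 - Pi1 + Pi2)| ≤ 2 * Cb * w ^ 2)
    (hB0 : |Pi0| ≤ Cb) (hB1 : |Pi1| ≤ Cb) (hB2 : |Pi2| ≤ Cb * w)
    (h0 : |Pi0 - ((1 / 2) * W ^ 2 * p ^ 2 + (5 / 2) * w)| ≤ Cb * w ^ 2)
    (h1 : |Pi1 - (W * p + 2 * W ^ 2 * p ^ 2 + 4 * w)| ≤ Cb * w ^ 2)
    (h2 : |Pi2 - 10 * w| ≤ Cb * w ^ 2) :
    |W * p - (1 + (5 / 2) * w + (31 / 4) * w ^ 2)| ≤ 2000 * Cb * w ^ 3 ∧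
    |p - (w + (5 / 2) * w ^ 2 + (31 / 4) * w ^ 3)| ≤ 2000 * Cb * w ^ 4 := by
  have hCb0 : (0:ℝ) < Cb := by linarith
  have hw20 : w ≤ 1 / 20 := by nlinarith
  have hq : Cb * w ^ 2 ≤ (1 / 20) * (Cb * w) := by nlinarith
  have hwCb : w ≤ Cb * w := by nlinarith
  have hpos1 : (0:ℝ) ≤ Cb * w := by positivity
  have hpos2 : (0:ℝ) ≤ Cb * w ^ 2 := by positivity
  have hpos3 : (0:ℝ) ≤ Cb * w ^ 3 := by positivity
  have hpos4 : (0:ℝ) ≤ Cb * w ^ 4 := by positivity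
  set x := W * p with hxdef
  -- crude bound on P
  have hP3 : |P| ≤ 3 * Cb := by
    have t := abs_sub_abs_le_abs_sub P (Pi0 - Pi1 + Pi2)
    have t1 : |Pi0 - Pi1 + Pi2| ≤ |Pi0 - Pi1| + |Pi2| := abs_add_le _ _
    have t2 : |Pi0 - Pi1| ≤ |Pi0| + |Pi1| := abs_sub _ _
    linarith
  -- fixed point equation
  have hWx : x * W = W - x * P := by
    have hxx : x * (W + P) = W := by
      calc x * (W + P) = W * (p * (W + P)) := by rw [hxdef]; ring
        _ = W := by rw [hid, mul_one]
    linear_combination hxx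
  have hfix : x = 1 - x * P * w := by
    calc x = x * (W * w) := by rw [hWw, mul_one]
      _ = (x * W) * w := by ring
      _ = (W - x * P) * w := by rw [hWx]
      _ = W * w - x * P * w := by ring
      _ = 1 - x * P * w := by rw [hWw]
  -- first-order bound |x - 1| ≤ 4 Cb w
  have hx1 : |x - 1| ≤ 4 * Cb * w := by
    have e : x - 1 = -(x * P * w) := by linarith [hfix]
    have b1 : |x - 1| = |x| * |P| * w := by
      rw [e, abs_neg, abs_mul, abs_mul, abs_of_pos hw0]
    have b2 : |x| ≤ |x - 1| + 1 := by
      have := abs_sub_abs_le_abs_sub x 1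
      simp only [abs_one] at this
      linarith
    have c1 : |x| * |P| ≤ (|x - 1| + 1) * (3 * Cb) :=
      mul_le_mul b2 hP3 (abs_nonneg _) (by positivity)
    have c2 : |x| * |P| * w ≤ (|x - 1| + 1) * (3 * Cb) * w :=
      mul_le_mul_of_nonneg_right c1 hw0.le
    have c3 : 3 * Cb * w * |x - 1| ≤ (3 / 20) * |x - 1| := by
      nlinarith [abs_nonneg (x - 1)]
    linarith [c2, c3, b1.le, b1.ge]
  have hxb : |x| ≤ 2 := by
    have b2 : |x| ≤ |x - 1| + 1 := by
      have := abs_sub_abs_le_abs_sub x 1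
      simp only [abs_one] at this
      linarith
    linarith
  have hxp1 : |x + 1| ≤ 3 := by
    have := abs_add_le x 1
    simp only [abs_one] at this
    linarith
  -- combined expansion error A
  have hA : |P + (3 / 2) * x ^ 2 + x - (17 / 2) * w| ≤ 5 * Cb * w ^ 2 := by
    have e : P + (3 / 2) * x ^ 2 + x - (17 / 2) * w
        = (P - (Pi0 - Pi1 + Pi2)) + (Pi0 - ((1 / 2) * W ^ 2 * p ^ 2 + (5 / 2) * w))
          - (Pi1 - (W * p + 2 * W ^ 2 * p ^ 2 + 4 * w)) + (Pi2 - 10 * w) := by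
      rw [hxdef]; ring
    have k1 := abs_add_le (P - (Pi0 - Pi1 + Pi2))
      (Pi0 - ((1 / 2) * W ^ 2 * p ^ 2 + (5 / 2) * w))
    have k2 := abs_sub ((P - (Pi0 - Pi1 + Pi2)) + (Pi0 - ((1 / 2) * W ^ 2 * p ^ 2 + (5 / 2) * w)))
      (Pi1 - (W * p + 2 * W ^ 2 * p ^ 2 + 4 * w))
    have k3 := abs_add_le ((P - (Pi0 - Pi1 + Pi2)) + (Pi0 - ((1 / 2) * W ^ 2 * p ^ 2 + (5 / 2) * w))
      - (Pi1 - (W * p + 2 * W ^ 2 * p ^ 2 + 4 * w))) (Pi2 - 10 * w)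
    rw [e]
    linarith
  -- |P + 5/2| ≤ 31 Cb w
  have hPc : |P + 5 / 2| ≤ 31 * Cb * w := by
    have e : P + 5 / 2 = (P + (3 / 2) * x ^ 2 + x - (17 / 2) * w)
        - (3 / 2) * ((x - 1) * (x + 1)) - (x - 1) + (17 / 2) * w := by ring
    have m1 : |(x - 1) * (x + 1)| ≤ (4 * Cb * w) * 3 := by
      rw [abs_mul]
      exact mul_le_mul hx1 hxp1 (abs_nonneg _) (by positivity)
    have k1 := abs_sub (P + (3 / 2) * x ^ 2 + x - (17 / 2) * w) ((3 / 2) * ((x - 1) * (x + 1)))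
    have k2 := abs_sub ((P + (3 / 2) * x ^ 2 + x - (17 / 2) * w) - (3 / 2) * ((x - 1) * (x + 1))) (x - 1)
    have k3 := abs_add_le ((P + (3 / 2) * x ^ 2 + x - (17 / 2) * w) - (3 / 2) * ((x - 1) * (x + 1)) - (x - 1)) ((17 / 2) * w)
    have m2 : |(3 / 2) * ((x - 1) * (x + 1))| = (3 / 2) * |(x - 1) * (x + 1)| := by
      rw [abs_mul]; norm_num
    have m3 : |(17 / 2) * w| = (17 / 2) * w := by
      rw [abs_mul, abs_of_pos hw0]; norm_num
    rw [e]
    linarith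
  -- second-order bound on x
  have hr : |x - 1 - (5 / 2) * w| ≤ 80 * Cb * w ^ 2 := by
    have e : x - 1 - (5 / 2) * w = -((x * (P + 5 / 2) - (5 / 2) * (x - 1)) * w) := by
      linear_combination hfix
    have m1 : |x * (P + 5 / 2)| ≤ 2 * (31 * Cb * w) := by
      rw [abs_mul]
      exact mul_le_mul hxb hPc (abs_nonneg _) (by norm_num)
    have m2 : |(5 / 2) * (x - 1)| ≤ (5 / 2) * (4 * Cb * w) := by
      rw [abs_mul, show |(5/2 : ℝ)| = 5/2 by norm_num]
      gcongr
    have k1 := abs_sub (x * (P + 5 / 2)) ((5 / 2) * (x - 1))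
    have hqq : |x * (P + 5 / 2) - (5 / 2) * (x - 1)| ≤ 72 * Cb * w := by linarith
    have e2 : |x - 1 - (5 / 2) * w| = |x * (P + 5 / 2) - (5 / 2) * (x - 1)| * w := by
      rw [e, abs_neg, abs_mul, abs_of_pos hw0]
    rw [e2]
    have := mul_le_mul_of_nonneg_right hqq hw0.le
    nlinarith [hpos2]
  -- bound on x^2 - 1 - 5w
  have hsq : |x ^ 2 - 1 - 5 * w| ≤ 250 * Cb * w ^ 2 := by
    have e : x ^ 2 - 1 - 5 * w = (x + 1) * (x - 1 - (5 / 2) * w) + (5 / 2) * w * (x - 1) := by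
      ring
    have m1 : |(x + 1) * (x - 1 - (5 / 2) * w)| ≤ 3 * (80 * Cb * w ^ 2) := by
      rw [abs_mul]
      exact mul_le_mul hxp1 hr (abs_nonneg _) (by norm_num)
    have m2 : |(5 / 2) * w * (x - 1)| ≤ (5 / 2) * w * (4 * Cb * w) := by
      rw [abs_mul, abs_mul, abs_of_pos hw0, show |(5/2 : ℝ)| = 5/2 by norm_num]
      gcongr
    have k1 := abs_add_le ((x + 1) * (x - 1 - (5 / 2) * w)) ((5 / 2) * w * (x - 1))
    rw [e]
    nlinarith [hpos2]
  -- refined bound on P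
  have hPc2 : |P + 5 / 2 + (3 / 2) * w| ≤ 500 * Cb * w ^ 2 := by
    have e : P + 5 / 2 + (3 / 2) * w = (P + (3 / 2) * x ^ 2 + x - (17 / 2) * w)
        - (3 / 2) * (x ^ 2 - 1 - 5 * w) - (x - 1 - (5 / 2) * w) := by ring
    have k1 := abs_sub (P + (3 / 2) * x ^ 2 + x - (17 / 2) * w) ((3 / 2) * (x ^ 2 - 1 - 5 * w))
    have k2 := abs_sub ((P + (3 / 2) * x ^ 2 + x - (17 / 2) * w) - (3 / 2) * (x ^ 2 - 1 - 5 * w))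
      (x - 1 - (5 / 2) * w)
    have m1 : |(3 / 2) * (x ^ 2 - 1 - 5 * w)| = (3 / 2) * |x ^ 2 - 1 - 5 * w| := by
      rw [abs_mul]; norm_num
    rw [e]
    linarith
  -- final bound on x
  have hfinal : |x - (1 + (5 / 2) * w + (31 / 4) * w ^ 2)| ≤ 2000 * Cb * w ^ 3 := by
    have e : x - (1 + (5 / 2) * w + (31 / 4) * w ^ 2)
        = (5 / 2) * w * (x - 1 - (5 / 2) * w) + (3 / 2) * w ^ 2 * (x - 1)
          - w * (x * (P + 5 / 2 + (3 / 2) * w)) := by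
      linear_combination hfix
    have m1 : |(5 / 2) * w * (x - 1 - (5 / 2) * w)| ≤ (5 / 2) * w * (80 * Cb * w ^ 2) := by
      rw [abs_mul, abs_mul, abs_of_pos hw0, show |(5/2 : ℝ)| = 5/2 by norm_num]
      gcongr
    have m2 : |(3 / 2) * w ^ 2 * (x - 1)| ≤ (3 / 2) * w ^ 2 * (4 * Cb * w) := by
      rw [abs_mul, abs_mul, abs_of_pos (show (0:ℝ) < w ^ 2 by positivity),
        show |(3/2 : ℝ)| = 3/2 by norm_num]
      gcongr
    have m3 : |w * (x * (P + 5 / 2 + (3 / 2) * w))| ≤ w * (2 * (500 * Cb * w ^ 2)) := by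
      rw [abs_mul, abs_mul, abs_of_pos hw0]
      have hh : |x| * |P + 5 / 2 + (3 / 2) * w| ≤ 2 * (500 * Cb * w ^ 2) :=
        mul_le_mul hxb hPc2 (abs_nonneg _) (by norm_num)
      exact mul_le_mul_of_nonneg_left hh hw0.le
    have k1 := abs_add_le ((5 / 2) * w * (x - 1 - (5 / 2) * w)) ((3 / 2) * w ^ 2 * (x - 1))
    have k2 := abs_sub ((5 / 2) * w * (x - 1 - (5 / 2) * w) + (3 / 2) * w ^ 2 * (x - 1))
      (w * (x * (P + 5 / 2 + (3 / 2) * w)))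
    rw [e]
    linarith
  refine ⟨hfinal, ?_⟩
  have e : p - (w + (5 / 2) * w ^ 2 + (31 / 4) * w ^ 3)
      = w * (x - (1 + (5 / 2) * w + (31 / 4) * w ^ 2)) := by
    rw [hxdef]
    linear_combination (-p) * hWw
  rw [e, abs_mul, abs_of_pos hw0]
  have := mul_le_mul_of_nonneg_left hfinal hw0.le
  nlinarith [hpos4]



/-- from the fixed-point identity `p_c(Ω + Π̂) = 1`, the bounds
`|Π̂⁽ᵐ⁾| ≤ C Ω^{1-(m∨1)}`, and the three second-order expansions of
`Π̂⁽⁰⁾, Π̂⁽¹⁾, Π̂⁽²⁾`, one gets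
`Ω p_c = 1 + (5/2)Ω⁻¹ + (31/4)Ω⁻² + O(Ω⁻³)`, i.e.
`p_c = (2d)⁻¹ + (5/2)(2d)⁻² + (31/4)(2d)⁻³ + O((2d)⁻⁴)`. -/
theorem pc_second_order_expansion (pc Pihat : ℕ → ℝ) (Pim : ℕ → ℕ → ℝ) (C : ℝ)
    (hpos : ∀ d : ℕ, 1 ≤ d → 0 < pc d)
    (hid : ∀ d : ℕ, 1 ≤ d → pc d * (2 * d + Pihat d) = 1)
    (hsum : ∀ d : ℕ, 1 ≤ d → HasSum (fun m : ℕ => (-1 : ℝ) ^ m * Pim d m) (Pihat d))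
    (hPim : ∀ (d m : ℕ), 1 ≤ d → |Pim d m| ≤ C * (2 * d : ℝ) ^ (1 - (max m 1 : ℤ)))
    (h0 : ∃ (c : ℝ) (D : ℕ), ∀ d : ℕ, D ≤ d →
      |Pim d 0 - ((1 / 2) * (2 * d) ^ 2 * pc d ^ 2 + (5 / 2) / (2 * d))| ≤ c / (2 * d) ^ 2)
    (h1 : ∃ (c : ℝ) (D : ℕ), ∀ d : ℕ, D ≤ d →
      |Pim d 1 - ((2 * d) * pc d + 2 * (2 * d) ^ 2 * pc d ^ 2 + 4 / (2 * d))|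
        ≤ c / (2 * d) ^ 2)
    (h2 : ∃ (c : ℝ) (D : ℕ), ∀ d : ℕ, D ≤ d →
      |Pim d 2 - 10 / (2 * d)| ≤ c / (2 * d) ^ 2) :
    ∃ (C' : ℝ) (d0 : ℕ), ∀ d : ℕ, d0 ≤ d →
      |2 * d * pc d - (1 + (5 / 2) / (2 * d) + (31 / 4) / (2 * d) ^ 2)| ≤ C' / (2 * d) ^ 3 ∧
      |pc d - (1 / (2 * d) + (5 / 2) / (2 * d) ^ 2 + (31 / 4) / (2 * d) ^ 3)|
        ≤ C' / (2 * d) ^ 4 := by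
  obtain ⟨c0, D0, hh0⟩ := h0
  obtain ⟨c1, D1, hh1⟩ := h1
  obtain ⟨c2, D2, hh2⟩ := h2
  set Cb : ℝ := |C| + |c0| + |c1| + |c2| + 1 with hCbdef
  have hCb1 : 1 ≤ Cb := by
    have := abs_nonneg C; have := abs_nonneg c0; have := abs_nonneg c1; have := abs_nonneg c2
    rw [hCbdef]; linarith
  have hCC : C ≤ Cb := by
    have := le_abs_self C; have := abs_nonneg c0; have := abs_nonneg c1; have := abs_nonneg c2
    rw [hCbdef]; linarith
  have hc0C : c0 ≤ Cb := by
    have := le_abs_self c0; have := abs_nonneg C; have := abs_nonneg c1; have := abs_nonneg c2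
    rw [hCbdef]; linarith
  have hc1C : c1 ≤ Cb := by
    have := le_abs_self c1; have := abs_nonneg C; have := abs_nonneg c0; have := abs_nonneg c2
    rw [hCbdef]; linarith
  have hc2C : c2 ≤ Cb := by
    have := le_abs_self c2; have := abs_nonneg C; have := abs_nonneg c0; have := abs_nonneg c1
    rw [hCbdef]; linarith
  refine ⟨2000 * Cb, max (max D0 D1) (max D2 (⌈10 * Cb⌉₊ + 1)), ?_⟩
  intro d hd
  simp only [max_le_iff] at hd
  obtain ⟨⟨hD0, hD1⟩, hD2, hdk⟩ := hd
  have hd1 : 1 ≤ d := by omega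
  have hdR : 10 * Cb ≤ (d : ℝ) := by
    refine (Nat.le_ceil _).trans ?_
    exact_mod_cast Nat.le_of_succ_le hdk
  have hW0 : (0:ℝ) < 2 * (d:ℝ) := by
    have : (1:ℝ) ≤ (d:ℝ) := by exact_mod_cast hd1
    linarith
  set w : ℝ := (2 * (d:ℝ))⁻¹ with hwdef
  have hw0 : 0 < w := by rw [hwdef]; positivity
  have hWw : (2 * (d:ℝ)) * w = 1 := mul_inv_cancel₀ hW0.ne'
  have h20 : 20 * Cb ≤ 2 * (d:ℝ) := by linarith
  have hCw : Cb * w ≤ 1 / 20 := by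
    rw [hwdef, ← div_eq_mul_inv, div_le_iff₀ hW0]
    linarith
  have hW2 : (2:ℝ) ≤ 2 * (d:ℝ) := by linarith
  -- tail bound
  have hT : |Pihat d - (Pim d 0 - Pim d 1 + Pim d 2)| ≤ 2 * Cb * w ^ 2 := by
    have h := tail_bound3 C (2 * (d:ℝ)) hW2 (Pim d) (Pihat d) (hsum d hd1)
      (fun m => hPim d m hd1)
    refine h.trans ?_
    calc 2 * C / (2 * (d:ℝ)) ^ 2 ≤ 2 * Cb / (2 * (d:ℝ)) ^ 2 := by gcongr
      _ = 2 * Cb * w ^ 2 := by rw [hwdef]; ring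
  -- crude bounds
  have hB0 : |Pim d 0| ≤ Cb := by
    have h := hPim d 0 hd1
    norm_num at h
    linarith
  have hB1 : |Pim d 1| ≤ Cb := by
    have h := hPim d 1 hd1
    norm_num at h
    linarith
  have hB2 : |Pim d 2| ≤ Cb * w := by
    have h := hPim d 2 hd1
    have e : (1 : ℤ) - (max (2:ℕ) 1 : ℤ) = -1 := by norm_num
    rw [e, zpow_neg_one] at h
    refine h.trans ?_
    rw [hwdef]
    have : (0:ℝ) ≤ (2 * (d:ℝ))⁻¹ := by positivity
    exact mul_le_mul_of_nonneg_right hCC this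
  -- expansions
  have hk0 : |Pim d 0 - ((1 / 2) * (2 * (d:ℝ)) ^ 2 * pc d ^ 2 + (5 / 2) * w)| ≤ Cb * w ^ 2 := by
    have h := hh0 d hD0
    rw [show (5 / 2 : ℝ) / (2 * (d:ℝ)) = (5 / 2) * w by rw [hwdef]; ring] at h
    refine h.trans ?_
    calc c0 / (2 * (d:ℝ)) ^ 2 ≤ Cb / (2 * (d:ℝ)) ^ 2 := by gcongr
      _ = Cb * w ^ 2 := by rw [hwdef]; ring
  have hk1 : |Pim d 1 - ((2 * (d:ℝ)) * pc d + 2 * (2 * (d:ℝ)) ^ 2 * pc d ^ 2 + 4 * w)|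
      ≤ Cb * w ^ 2 := by
    have h := hh1 d hD1
    rw [show (4 : ℝ) / (2 * (d:ℝ)) = 4 * w by rw [hwdef]; ring] at h
    refine h.trans ?_
    calc c1 / (2 * (d:ℝ)) ^ 2 ≤ Cb / (2 * (d:ℝ)) ^ 2 := by gcongr
      _ = Cb * w ^ 2 := by rw [hwdef]; ring
  have hk2 : |Pim d 2 - 10 * w| ≤ Cb * w ^ 2 := by
    have h := hh2 d hD2
    rw [show (10 : ℝ) / (2 * (d:ℝ)) = 10 * w by rw [hwdef]; ring] at h
    refine h.trans ?_
    calc c2 / (2 * (d:ℝ)) ^ 2 ≤ Cb / (2 * (d:ℝ)) ^ 2 := by gcongr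
      _ = Cb * w ^ 2 := by rw [hwdef]; ring
  have hkey := key_expansion Cb (2 * (d:ℝ)) w (pc d) (Pihat d) (Pim d 0) (Pim d 1) (Pim d 2)
    hCb1 hw0 hWw hCw (hid d hd1) hT hB0 hB1 hB2 hk0 hk1 hk2
  constructor
  · rw [show (1 : ℝ) + (5 / 2) / (2 * (d:ℝ)) + (31 / 4) / (2 * (d:ℝ)) ^ 2
        = 1 + (5 / 2) * w + (31 / 4) * w ^ 2 by rw [hwdef]; ring,
      show (2000 * Cb) / (2 * (d:ℝ)) ^ 3 = 2000 * Cb * w ^ 3 by rw [hwdef]; ring]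
    exact hkey.1
  · rw [show (1 : ℝ) / (2 * (d:ℝ)) + (5 / 2) / (2 * (d:ℝ)) ^ 2 + (31 / 4) / (2 * (d:ℝ)) ^ 3
        = w + (5 / 2) * w ^ 2 + (31 / 4) * w ^ 3 by rw [hwdef]; ring,
      show (2000 * Cb) / (2 * (d:ℝ)) ^ 4 = 2000 * Cb * w ^ 4 by rw [hwdef]; ring]
    exact hkey.2
end
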